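/- arXiv:math/0611468 — 2 statements merged into one kernel-verified Lean document; each statement's English description precedes it below -/
import Mathlib

section
/- Let θ ∈ ℝ be irrational and let Λ ⊂ (ℝ/ℤ)² be a C¹ curve that is at some point transversal to the direction (1, θ). Then the line flow t ↦ (t mod 1, θ·t mod 1) crosses Λ infinitely often; more precisely there exists T > 0 such that on every interval of length T the orbit intersects Λ at least once. -/
/-!
Put `F l = (c l).2 - θ * (c l).1`. The winding passes through `c l` at time `(c l).1 + n` as soon
as `n θ ≡ F l (mod 1)`. Transversality says `F' l₀ ≠ 0`, so `F` is not constant on `[0, 1]` and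
its image contains an open interval `I`. The multiples of `θ` are dense in the compact circle,
so finitely many translates `I - k θ` already cover it: every run of integers of bounded length
contains some `n` with `n θ ∈ I (mod 1)`.
-/

open Set

theorem HasDerivWithinAt.exists_mem_apply_ne {𝕜 F : Type*} [NontriviallyNormedField 𝕜]
    [NormedAddCommGroup F] [NormedSpace 𝕜 F] {f : 𝕜 → F} {f' : F} {s : Set 𝕜} {x : 𝕜}
    (hf : HasDerivWithinAt f f' s x) (hs : UniqueDiffWithinAt 𝕜 s x) (hf' : f' ≠ 0) :
    ∃ y ∈ s, f y ≠ f x := by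
  by_contra! hconst
  have hzero : HasDerivWithinAt f 0 s x :=
    (hasDerivWithinAt_const x s (f x)).congr hconst rfl
  exact hf' (hs.eq_deriv s hf hzero)

theorem IsPreconnected.interior_nonempty_of_ne {α : Type*} [LinearOrder α] [TopologicalSpace α]
    [OrderTopology α] [DenselyOrdered α] {s : Set α} (hs : IsPreconnected s) {a b : α}
    (ha : a ∈ s) (hb : b ∈ s) (hab : a ≠ b) : (interior s).Nonempty := by
  wlog hlt : a < b generalizing a b
  · exact this hb ha hab.symm (hab.lt_or_gt.resolve_left hlt)
  exact (nonempty_Ioo.2 hlt).mono <|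
    interior_maximal (Ioo_subset_Icc_self.trans (hs.Icc_subset ha hb)) isOpen_Ioo

theorem DenseRange.exists_abs_le_add_zsmul_mem {G : Type*} [AddGroup G] [TopologicalSpace G]
    [ContinuousAdd G] [CompactSpace G] {g : G} (hg : DenseRange (· • g : ℤ → G)) {U : Set G}
    (hU : IsOpen U) (hne : U.Nonempty) : ∃ B : ℕ, ∀ x : G, ∃ k : ℤ, |k| ≤ B ∧ x + k • g ∈ U := by
  have hcover : univ ⊆ ⋃ k : ℤ, (· + k • g) ⁻¹' U := fun x _ => by
    obtain ⟨u, hu⟩ := hne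
    obtain ⟨k, hk⟩ := hg.exists_mem_open (hU.preimage (continuous_const_add x))
      ⟨-x + u, by simpa using hu⟩
    exact mem_iUnion.2 ⟨k, hk⟩
  obtain ⟨t, ht⟩ := isCompact_univ.elim_finite_subcover _
    (fun k => hU.preimage (continuous_add_const (k • g))) hcover
  refine ⟨t.sup Int.natAbs, fun x => ?_⟩
  obtain ⟨k, hk, hxk⟩ := mem_iUnion₂.1 (ht (mem_univ x))
  refine ⟨k, ?_, hxk⟩
  rw [Int.abs_eq_natAbs]
  exact_mod_cast Finset.le_sup (f := Int.natAbs) hk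

theorem coe_winding_eq_of_zsmul_eq {θ x y : ℝ} {n : ℤ}
    (h : n • (θ : AddCircle (1 : ℝ)) = ↑(y - θ * x)) :
    ((↑(x + n) : AddCircle (1 : ℝ)), (↑(θ * (x + n)) : AddCircle (1 : ℝ))) = (↑x, ↑y) := by
  rw [← AddCircle.coe_zsmul, zsmul_eq_mul] at h
  have hθ : θ * (x + n) = y + (n * θ - (y - θ * x)) := by ring
  refine Prod.ext ?_ ?_
  · simp
  · dsimp only
    rw [hθ, AddCircle.coe_add, AddCircle.coe_sub, h, sub_self, add_zero]

theorem exists_winding_eq_of_interior_image_nonempty {θ : ℝ} (hθ : Irrational θ)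
    {c : ℝ → ℝ × ℝ} {s : Set ℝ} {M : ℝ} (hM : ∀ l ∈ s, |(c l).1| ≤ M)
    (hF : (interior ((fun l => (c l).2 - θ * (c l).1) '' s)).Nonempty) :
    ∃ T > 0, ∀ t₀ : ℝ, ∃ t ∈ Icc t₀ (t₀ + T), ∃ l ∈ s,
      ((↑t : AddCircle (1 : ℝ)), (↑(θ * t) : AddCircle (1 : ℝ))) = (↑(c l).1, ↑(c l).2) := by
  have hdense : DenseRange (· • (θ : AddCircle (1 : ℝ)) : ℤ → AddCircle (1 : ℝ)) :=
    AddCircle.denseRange_zsmul_coe_iff.2 (by rwa [div_one])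
  obtain ⟨B, hB⟩ := hdense.exists_abs_le_add_zsmul_mem
    (QuotientAddGroup.isOpenMap_coe _ isOpen_interior) (hF.image _)
  obtain ⟨l₀, hl₀, -⟩ := interior_subset hF.some_mem
  have hM0 : 0 ≤ M := (abs_nonneg _).trans (hM l₀ hl₀)
  refine ⟨2 * (B + M) + 1, by positivity, fun t₀ => ?_⟩
  set N : ℤ := ⌈t₀ + M + B⌉
  obtain ⟨k, hk, v, hv, hvN⟩ := hB (N • (θ : AddCircle (1 : ℝ)))
  obtain ⟨l, hl, rfl⟩ := interior_subset hv
  rw [← add_zsmul] at hvN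
  have hN : t₀ + M + B ≤ N := Int.le_ceil _
  have hN_lt : N < t₀ + M + B + 1 := Int.ceil_lt_add_one _
  have hkB : |(k : ℝ)| ≤ B := by exact_mod_cast hk
  have hlM := hM l hl
  rw [abs_le] at hkB hlM
  refine ⟨(c l).1 + ↑(N + k), ⟨?_, ?_⟩, l, hl, coe_winding_eq_of_zsmul_eq hvN.symm⟩ <;>
    push_cast <;> linarith

theorem irrational_winding_crosses_transversal_curve_general
    (θ : ℝ) (hθ : Irrational θ)
    (c : ℝ → ℝ × ℝ) (c' : ℝ → ℝ × ℝ)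
    (hc : ∀ l ∈ Set.Icc (0:ℝ) 1, HasDerivAt c (c' l) l)
    (l₀ : ℝ) (hl₀ : l₀ ∈ Set.Icc (0:ℝ) 1)
    (htrans : ∀ s : ℝ, c' l₀ ≠ (s, s * θ)) :
    ∃ T > 0, ∀ t₀ : ℝ, ∃ t ∈ Set.Icc t₀ (t₀ + T), ∃ l ∈ Set.Icc (0:ℝ) 1,
      ((↑t : AddCircle (1:ℝ)), (↑(θ * t) : AddCircle (1:ℝ)))
        = ((↑(c l).1 : AddCircle (1:ℝ)), (↑(c l).2 : AddCircle (1:ℝ))) := by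
  set F : ℝ → ℝ := fun l => (c l).2 - θ * (c l).1
  have hc_cont : ContinuousOn c (Icc 0 1) := fun l hl => (hc l hl).continuousAt.continuousWithinAt
  have hF_cont : ContinuousOn F (Icc 0 1) := by fun_prop
  have hF_deriv : HasDerivAt F ((c' l₀).2 - θ * (c' l₀).1) l₀ :=
    (ContinuousLinearMap.snd ℝ ℝ ℝ - θ • ContinuousLinearMap.fst ℝ ℝ ℝ).hasFDerivAt.comp_hasDerivAt
      l₀ (hc l₀ hl₀)
  have hF_deriv_ne : (c' l₀).2 - θ * (c' l₀).1 ≠ 0 :=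
    fun h => htrans _ (Prod.ext rfl (by linarith))
  obtain ⟨l₁, hl₁, hne⟩ := hF_deriv.hasDerivWithinAt.exists_mem_apply_ne
    (uniqueDiffOn_Icc zero_lt_one l₀ hl₀) hF_deriv_ne
  obtain ⟨M, hM⟩ := isCompact_Icc.exists_bound_of_continuousOn
    (continuous_fst.comp_continuousOn hc_cont)
  exact exists_winding_eq_of_interior_image_nonempty hθ hM
    ((isPreconnected_Icc.image F hF_cont).interior_nonempty_of_ne (mem_image_of_mem F hl₁)
      (mem_image_of_mem F hl₀) hne)

/-- an irrational winding crosses, with bounded gaps, any C¹ curve in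
the torus that is somewhere transversal to the flow direction (1, θ). -/
theorem irrational_winding_crosses_transversal_curve
    (θ : ℝ) (hθ : Irrational θ)
    (c : ℝ → ℝ × ℝ) (c' : ℝ → ℝ × ℝ)
    (hc : ∀ l ∈ Set.Icc (0:ℝ) 1, HasDerivAt c (c' l) l)
    (hc' : ContinuousOn c' (Set.Icc (0:ℝ) 1))
    (l₀ : ℝ) (hl₀ : l₀ ∈ Set.Icc (0:ℝ) 1)
    (htrans : ∀ s : ℝ, c' l₀ ≠ (s, s * θ)) :
    ∃ T > 0, ∀ t₀ : ℝ, ∃ t ∈ Set.Icc t₀ (t₀ + T), ∃ l ∈ Set.Icc (0:ℝ) 1,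
      ((↑t : AddCircle (1:ℝ)), (↑(θ * t) : AddCircle (1:ℝ)))
        = ((↑(c l).1 : AddCircle (1:ℝ)), (↑(c l).2 : AddCircle (1:ℝ))) :=
  irrational_winding_crosses_transversal_curve_general θ hθ c c' hc l₀ hl₀ htrans
end

section
/- Let Φ₁, Φ₂ : ℝ → ℝ be C¹ with derivatives Φ₁' = ε·γ₁, Φ₂' = ε·γ₂ in the sense γ_k(I) = ε⁻¹·dΦ_k/dξ at I = εξ. Suppose γ₁, γ₂ are constants with γ₁/γ₂ irrational, and let Λ ⊂ (ℝ/ℤ) × (ℝ/2ℤ) be a fixed C¹ curve transversal at some point to the vector (γ₁, γ₂). Then the number of ξ ∈ [0, Δ/ε] at which the point (γ₁ξ mod 1, γ₂ξ mod 2) lies on Λ is at least ⌊Δ/(ε·c)⌋ for some constant c > 0 independent of ε. -/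
/-!
Write `α = γ₁ / γ₂` and `φ l = (c l).1 - α * (c l).2`. The time `ξ = ((c l).2 + 2k) / γ₂` is a
crossing as soon as `φ l ≡ k • 2α (mod 1)`. Transversality at `l₀` means `φ' l₀ ≠ 0`, so
`φ '' [0, 1]` has nonempty interior. Since `2α` is irrational its multiples are dense in
`ℝ/ℤ`, and by compactness of the circle there is `K` such that every block `k ∈ [n - K, n + K]`
of multiples meets that interior. Choosing `n ≈ γ₂ t / 2` yields a crossing within bounded
distance of every time `t`; one crossing in each of the disjoint windows `[2iC, 2iC + C]`
gives the count.
-/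

open Set

theorem DenseRange.exists_natAbs_le_forall_add_zsmul_mem {G : Type*} [AddGroup G]
    [TopologicalSpace G] [ContinuousAdd G] [CompactSpace G] {a : G}
    (ha : DenseRange (· • a : ℤ → G)) {U : Set G} (hU : IsOpen U) (hne : U.Nonempty) :
    ∃ K : ℕ, ∀ y : G, ∃ j : ℤ, j.natAbs ≤ K ∧ y + j • a ∈ U := by
  have hcover : univ ⊆ ⋃ j : ℤ, (· + j • a) ⁻¹' U := by
    intro y _
    obtain ⟨u, hu⟩ := hne
    obtain ⟨j, hj⟩ := ha.exists_mem_open (hU.preimage (continuous_const_add y))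
      ⟨-y + u, by simpa [← add_assoc]⟩
    exact mem_iUnion.2 ⟨j, hj⟩
  obtain ⟨t, ht⟩ := isCompact_univ.elim_finite_subcover _
    (fun j => hU.preimage (continuous_add_const (j • a))) hcover
  refine ⟨t.sup Int.natAbs, fun y => ?_⟩
  obtain ⟨j, hjt, hj⟩ := mem_iUnion₂.1 (ht (mem_univ y))
  exact ⟨j, Finset.le_sup hjt, hj⟩

theorem Irrational.exists_natAbs_sub_le_forall_zsmul_mem_image {θ : ℝ} (hθ : Irrational θ)
    {V : Set ℝ} (hV : (interior V).Nonempty) :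
    ∃ K : ℕ, ∀ n : ℤ, ∃ k : ℤ, (k - n).natAbs ≤ K ∧
      k • (θ : AddCircle (1 : ℝ)) ∈ ((↑) '' V : Set (AddCircle (1 : ℝ))) := by
  have hdense : DenseRange (· • (θ : AddCircle (1 : ℝ)) : ℤ → AddCircle (1 : ℝ)) :=
    AddCircle.denseRange_zsmul_coe_iff.2 (by rwa [div_one])
  obtain ⟨K, hK⟩ := hdense.exists_natAbs_le_forall_add_zsmul_mem
    (QuotientAddGroup.isOpenMap_coe _ isOpen_interior) (hV.image _)
  refine ⟨K, fun n => ?_⟩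
  obtain ⟨j, hjK, hj⟩ := hK (n • (θ : AddCircle (1 : ℝ)))
  refine ⟨n + j, by simpa using hjK, ?_⟩
  rw [add_zsmul]
  exact image_mono interior_subset hj

theorem IsPreconnected.nonempty_interior_image_of_hasDerivWithinAt_ne_zero {f : ℝ → ℝ}
    {f' x : ℝ} {s : Set ℝ} (hs : IsPreconnected s) (hf : ContinuousOn f s) (hx : x ∈ s)
    (hsx : UniqueDiffWithinAt ℝ s x) (hfx : HasDerivWithinAt f f' s x) (hf' : f' ≠ 0) :
    (interior (f '' s)).Nonempty := by
  obtain ⟨y, hy, hne⟩ : ∃ y ∈ s, f x ≠ f y := by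
    by_contra! hconst
    exact hf' (hsx.eq_deriv _ hfx
      ((hasDerivWithinAt_const x s (f x)).congr (fun y hy => (hconst y hy).symm) rfl))
  have hsub : uIcc (f x) (f y) ⊆ f '' s :=
    (isPreconnected_iff_ordConnected.1 (hs.image f hf)).uIcc_subset
      (mem_image_of_mem f hx) (mem_image_of_mem f hy)
  refine (nonempty_Ioo.2 (min_lt_max.2 hne)).mono ?_
  rw [← interior_Icc]
  exact interior_mono hsub

def torusMk (p : ℝ × ℝ) : AddCircle (1:ℝ) × AddCircle (2:ℝ) :=
  ((p.1 : AddCircle (1:ℝ)), (p.2 : AddCircle (2:ℝ)))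

def IsCrossing (γ₁ γ₂ : ℝ) (c : ℝ → ℝ × ℝ) (ξ : ℝ) : Prop :=
  ∃ l ∈ Icc (0:ℝ) 1, torusMk (γ₁ * ξ, γ₂ * ξ) = torusMk (c l)

section TorusFlow

variable {γ₁ γ₂ : ℝ}

theorem torusMk_flow_eq_of_coe_sub_eq_zsmul (hγ₂ : γ₂ ≠ 0) {x y : ℝ} {k : ℤ}
    (h : ((x - γ₁ / γ₂ * y : ℝ) : AddCircle (1:ℝ)) = k • ((2 * (γ₁ / γ₂) : ℝ) : AddCircle (1:ℝ))) :
    torusMk (γ₁ * ((y + 2 * k) / γ₂), γ₂ * ((y + 2 * k) / γ₂)) = torusMk (x, y) := by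
  have h₁ : γ₁ * ((y + 2 * k) / γ₂) = γ₁ / γ₂ * y + k • (2 * (γ₁ / γ₂)) := by
    rw [zsmul_eq_mul]; field_simp
  have h₂ : γ₂ * ((y + 2 * k) / γ₂) = y + k • (2 : ℝ) := by
    rw [zsmul_eq_mul]; field_simp
  simp only [torusMk]
  rw [h₁, h₂, AddCircle.coe_add, AddCircle.coe_add, AddCircle.coe_zsmul, AddCircle.coe_zsmul,
    AddCircle.coe_period, smul_zero, add_zero, ← h, ← AddCircle.coe_add, add_sub_cancel]

variable {c c' : ℝ → ℝ × ℝ} {l₀ : ℝ}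

theorem nonempty_interior_image_of_transverse (hγ₂ : γ₂ ≠ 0)
    (hc : ∀ l ∈ Icc (0:ℝ) 1, HasDerivAt c (c' l) l) (hl₀ : l₀ ∈ Icc (0:ℝ) 1)
    (htrans : ∀ s : ℝ, c' l₀ ≠ (s * γ₁, s * γ₂)) :
    (interior ((fun l => (c l).1 - γ₁ / γ₂ * (c l).2) '' Icc 0 1)).Nonempty := by
  have hφ : ∀ l ∈ Icc (0:ℝ) 1,
      HasDerivAt (fun l => (c l).1 - γ₁ / γ₂ * (c l).2) ((c' l).1 - γ₁ / γ₂ * (c' l).2) l :=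
    fun l hl => (ContinuousLinearMap.fst ℝ ℝ ℝ - (γ₁ / γ₂) • ContinuousLinearMap.snd ℝ ℝ ℝ)
      |>.hasFDerivAt.comp_hasDerivAt l (hc l hl)
  refine isPreconnected_Icc.nonempty_interior_image_of_hasDerivWithinAt_ne_zero
    (fun l hl => (hφ l hl).continuousAt.continuousWithinAt) hl₀
    (uniqueDiffOn_Icc zero_lt_one l₀ hl₀) (hφ l₀ hl₀).hasDerivWithinAt fun h => ?_
  refine htrans ((c' l₀).2 / γ₂) (Prod.ext ?_ ?_)
  · linear_combination h
  · exact (div_mul_cancel₀ _ hγ₂).symm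

theorem exists_isCrossing_abs_sub_le (hirr : Irrational (γ₁ / γ₂))
    (hc : ∀ l ∈ Icc (0:ℝ) 1, HasDerivAt c (c' l) l) (hl₀ : l₀ ∈ Icc (0:ℝ) 1)
    (htrans : ∀ s : ℝ, c' l₀ ≠ (s * γ₁, s * γ₂)) :
    ∃ R, ∀ t, ∃ ξ, |ξ - t| ≤ R ∧ IsCrossing γ₁ γ₂ c ξ := by
  -- `γ₁ / 0 = 0` is rational
  have hγ₂ : γ₂ ≠ 0 := by rintro rfl; simp at hirr
  have h2irr : Irrational (2 * (γ₁ / γ₂)) := by exact_mod_cast hirr.natCast_mul two_ne_zero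
  obtain ⟨K, hK⟩ := h2irr.exists_natAbs_sub_le_forall_zsmul_mem_image
    (nonempty_interior_image_of_transverse hγ₂ hc hl₀ htrans)
  have hc₂ : ContinuousOn (fun l => (c l).2) (Icc (0:ℝ) 1) :=
    fun l hl => (hc l hl).continuousAt.snd.continuousWithinAt
  obtain ⟨M, hM⟩ := isCompact_Icc.exists_bound_of_continuousOn hc₂
  refine ⟨(M + 2 * K + 1) / |γ₂|, fun t => ?_⟩
  set n := round (γ₂ * t / 2)
  obtain ⟨k, hkn, _, ⟨l, hl, rfl⟩, hk⟩ := hK n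
  refine ⟨((c l).2 + 2 * k) / γ₂, ?_, l, hl, torusMk_flow_eq_of_coe_sub_eq_zsmul hγ₂ hk⟩
  have hcl : |(c l).2| ≤ M := hM l hl
  have hkn' : |(k : ℝ) - n| ≤ K := by
    rw [← Int.cast_sub, ← Int.cast_abs, Int.abs_eq_natAbs]; exact_mod_cast hkn
  have hround : |γ₂ * t / 2 - n| ≤ 1 / 2 := abs_sub_round _
  have hξ : (((c l).2 + 2 * k) / γ₂ - t) * γ₂
      = (c l).2 + 2 * (k - n) - 2 * (γ₂ * t / 2 - n) := by
    field_simp; ring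
  rw [le_div_iff₀ (abs_pos.2 hγ₂), ← abs_mul, hξ]
  rw [abs_le] at hcl hkn' hround ⊢
  constructor <;> linarith

theorem exists_isCrossing_mem_Icc (hirr : Irrational (γ₁ / γ₂))
    (hc : ∀ l ∈ Icc (0:ℝ) 1, HasDerivAt c (c' l) l) (hl₀ : l₀ ∈ Icc (0:ℝ) 1)
    (htrans : ∀ s : ℝ, c' l₀ ≠ (s * γ₁, s * γ₂)) :
    ∃ C > 0, ∀ t, ∃ ξ ∈ Icc t (t + C), IsCrossing γ₁ γ₂ c ξ := by
  obtain ⟨R, hR⟩ := exists_isCrossing_abs_sub_le hirr hc hl₀ htrans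
  obtain ⟨ξ₀, hξ₀, -⟩ := hR 0
  have hR₀ : 0 ≤ R := (abs_nonneg _).trans hξ₀
  refine ⟨2 * R + 1, by positivity, fun t => ?_⟩
  obtain ⟨ξ, hξ, hcross⟩ := hR (t + R)
  rw [abs_le] at hξ
  exact ⟨ξ, ⟨by linarith, by linarith⟩, hcross⟩

end TorusFlow

theorem exists_finset_floor_le_card_of_forall_exists_mem_Icc {P : ℝ → Prop} {C : ℝ}
    (hC : 0 < C) (h : ∀ t, ∃ ξ ∈ Icc t (t + C), P ξ) (T : ℝ) :
    ∃ S : Finset ℝ, (∀ ξ ∈ S, ξ ∈ Icc 0 T ∧ P ξ) ∧ ⌊T / (2 * C)⌋₊ ≤ S.card := by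
  choose f hf hPf using h
  set g : ℕ → ℝ := fun i => f (2 * C * i)
  have hg : ∀ i : ℕ, 2 * C * i ≤ g i ∧ g i ≤ 2 * C * i + C := fun i => hf _
  have hg_mono : StrictMono g := strictMono_nat_of_lt_succ fun i => by
    have := hg (i + 1); push_cast at this; linarith [hg i]
  refine ⟨(Finset.range ⌊T / (2 * C)⌋₊).image g, ?_, ?_⟩
  · simp only [Finset.mem_image, Finset.mem_range]
    rintro _ ⟨i, hi, rfl⟩
    have hiT : ((i + 1 : ℕ) : ℝ) ≤ T / (2 * C) := (Nat.le_floor_iff' i.succ_ne_zero).1 hi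
    rw [le_div_iff₀ (by positivity)] at hiT
    push_cast at hiT
    exact ⟨⟨(by positivity : (0:ℝ) ≤ 2 * C * i).trans (hg i).1, by linarith [hg i]⟩, hPf _⟩
  · rw [Finset.card_image_of_injective _ hg_mono.injective, Finset.card_range]

theorem crossing_count_lower_bound_general
    (γ₁ γ₂ : ℝ) (hirr : Irrational (γ₁ / γ₂))
    (c : ℝ → ℝ × ℝ) (c' : ℝ → ℝ × ℝ)
    (hc : ∀ l ∈ Set.Icc (0:ℝ) 1, HasDerivAt c (c' l) l)
    (l₀ : ℝ) (hl₀ : l₀ ∈ Set.Icc (0:ℝ) 1)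
    (htrans : ∀ s : ℝ, c' l₀ ≠ (s * γ₁, s * γ₂))
    (Δ : ℝ) :
    ∃ c₀ > 0, ∀ ε > 0, ∃ S : Finset ℝ,
      (∀ ξ ∈ S, ξ ∈ Set.Icc 0 (Δ / ε) ∧ ∃ l ∈ Set.Icc (0:ℝ) 1,
        ((↑(γ₁ * ξ) : AddCircle (1:ℝ)), (↑(γ₂ * ξ) : AddCircle (2:ℝ)))
          = ((↑(c l).1 : AddCircle (1:ℝ)), (↑(c l).2 : AddCircle (2:ℝ)))) ∧
      Nat.floor (Δ / (ε * c₀)) ≤ S.card := by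
  obtain ⟨C, hC, hgap⟩ := exists_isCrossing_mem_Icc hirr hc hl₀ htrans
  refine ⟨2 * C, by positivity, fun ε _ => ?_⟩
  rw [← div_div]
  exact exists_finset_floor_le_card_of_forall_exists_mem_Icc hC hgap (Δ / ε)

/-- for a linear flow ξ ↦ (γ₁ξ mod 1, γ₂ξ mod 2) with irrational
frequency ratio and a fixed C¹ curve Λ in the torus transversal at some point to
(γ₁, γ₂), there is c₀ > 0 such that for every ε > 0 the number of crossing times
ξ ∈ [0, Δ/ε] is at least ⌊Δ/(ε·c₀)⌋. -/
theorem crossing_count_lower_bound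
    (γ₁ γ₂ : ℝ) (hγ₂ : γ₂ ≠ 0) (hirr : Irrational (γ₁ / γ₂))
    (c : ℝ → ℝ × ℝ) (c' : ℝ → ℝ × ℝ)
    (hc : ∀ l ∈ Set.Icc (0:ℝ) 1, HasDerivAt c (c' l) l)
    (hcont : ContinuousOn c' (Set.Icc (0:ℝ) 1))
    (l₀ : ℝ) (hl₀ : l₀ ∈ Set.Icc (0:ℝ) 1)
    (htrans : ∀ s : ℝ, c' l₀ ≠ (s * γ₁, s * γ₂))
    (Δ : ℝ) (hΔ : 0 < Δ) :
    ∃ c₀ > 0, ∀ ε > 0, ∃ S : Finset ℝ,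
      (∀ ξ ∈ S, ξ ∈ Set.Icc 0 (Δ / ε) ∧ ∃ l ∈ Set.Icc (0:ℝ) 1,
        ((↑(γ₁ * ξ) : AddCircle (1:ℝ)), (↑(γ₂ * ξ) : AddCircle (2:ℝ)))
          = ((↑(c l).1 : AddCircle (1:ℝ)), (↑(c l).2 : AddCircle (2:ℝ)))) ∧
      Nat.floor (Δ / (ε * c₀)) ≤ S.card :=
  crossing_count_lower_bound_general γ₁ γ₂ hirr c c' hc l₀ hl₀ htrans Δ
end
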